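/- arXiv:1903.03551 — 2 statements merged into one kernel-verified Lean document; each statement's English description precedes it below -/
import Mathlib

section
/- Let X be a compact metric space, let α > 0 and let q > 1. Then the set {μ ∈ M : D⁺_μ(q) ≥ α} is a G_δ subset of the space M of Borel probability measures on X with the weak topology; consequently, {μ ∈ M : D⁺_μ(q) = +∞} is also a G_δ subset of M. -/
/-!
Write `f_ε(μ,x) = ∫ fker ε x dμ`, where `fker ε x` is a continuous bump equal to `1` on `B(x,ε)`
and vanishing off `B(x,2ε)`, and `J_μ(q,ε) = ∫ f_ε(μ,·)^(q-1) dμ`. Then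
`I_μ(q,ε) ≤ J_μ(q,ε) ≤ I_μ(q,2ε)`, and since `log(2ε) / log ε → 1` the energy `I` may be replaced
by `J` in the definition of `D⁺_μ(q)`. For fixed `ε` the functions `f_ε(μ,·)` are
`ε⁻¹`-Lipschitz, so on a compact space weak convergence of `μ` makes them converge uniformly and
`μ ↦ J_μ(q,ε)` is continuous. Finally, for a family of lower semicontinuous functions of `μ`
indexed by `ε`, the set where the `limsup` as `ε → 0⁺` is at least `a` is the intersection, over
rationals `b < a` and `n ∈ ℕ`, of the open sets `⋃_{ε < 1/n} {μ | b < g_μ(ε)}`.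
-/

open MeasureTheory Filter Topology Metric Set
open scoped ENNReal NNReal

section Defs

variable {X : Type*} [MetricSpace X] [MeasurableSpace X]

/-- The topological support of a Borel measure on a metric space: the set of points all of whose
balls have positive measure. -/
def msupp (μ : Measure X) : Set X := {x : X | ∀ ε > 0, 0 < μ (ball x ε)}

/-- The energy function `I_μ(q, ε) = ∫_{supp μ} μ(B(x,ε))^(q-1) dμ(x)`. -/
noncomputable def energyI (μ : Measure X) (q ε : ℝ) : ℝ :=
  ∫ x in msupp μ, (μ (ball x ε)).toReal ^ (q - 1) ∂μ

/-- The lower `q`-generalized fractal dimension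
`D⁻_μ(q) = liminf_{ε→0⁺} log I_μ(q,ε) / ((q-1) log ε)` (as an extended real number). -/
noncomputable def Dlower (μ : Measure X) (q : ℝ) : EReal :=
  liminf (fun ε : ℝ =>
    ((Real.log (energyI μ q ε) / ((q - 1) * Real.log ε) : ℝ) : EReal)) (𝓝[>] (0 : ℝ))

/-- The upper `q`-generalized fractal dimension
`D⁺_μ(q) = limsup_{ε→0⁺} log I_μ(q,ε) / ((q-1) log ε)` (as an extended real number). -/
noncomputable def Dupper (μ : Measure X) (q : ℝ) : EReal :=
  limsup (fun ε : ℝ =>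
    ((Real.log (energyI μ q ε) / ((q - 1) * Real.log ε) : ℝ) : EReal)) (𝓝[>] (0 : ℝ))

/-- `∫_{supp μ} log μ(B(x,ε)) dμ(x)`, the numerator in the entropy dimension. -/
noncomputable def entNum (μ : Measure X) (ε : ℝ) : ℝ :=
  ∫ x in msupp μ, Real.log (μ (ball x ε)).toReal ∂μ

/-- The lower entropy dimension
`D⁻_μ(1) = liminf_{ε→0⁺} (∫_{supp μ} log μ(B(x,ε)) dμ(x)) / log ε`. -/
noncomputable def D1lower (μ : Measure X) : EReal :=
  liminf (fun ε : ℝ => ((entNum μ ε / Real.log ε : ℝ) : EReal)) (𝓝[>] (0 : ℝ))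

/-- The upper entropy dimension
`D⁺_μ(1) = limsup_{ε→0⁺} (∫_{supp μ} log μ(B(x,ε)) dμ(x)) / log ε`. -/
noncomputable def D1upper (μ : Measure X) : EReal :=
  limsup (fun ε : ℝ => ((entNum μ ε / Real.log ε : ℝ) : EReal)) (𝓝[>] (0 : ℝ))

/-- A measure is `T`-invariant if `μ(T⁻¹ s) = μ s` for every measurable `s`. -/
def IsInvariantMeasure (T : X → X) (μ : Measure X) : Prop :=
  ∀ s : Set X, MeasurableSet s → μ (T ⁻¹' s) = μ s

/-- `M(T)`: the set of `T`-invariant Borel probability measures on `X`. -/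
def invSet (T : X → X) : Set (ProbabilityMeasure X) :=
  {μ : ProbabilityMeasure X | IsInvariantMeasure T μ.toMeasure}

/-- A `T`-periodic measure: `μ = (1/k) ∑_{i<k} δ_{T^i x}` for a `T`-periodic point `x`
of period `k`. -/
def IsPeriodicMeasure (T : X → X) (μ : ProbabilityMeasure X) : Prop :=
  ∃ (x : X) (k : ℕ), 0 < k ∧ T^[k] x = x ∧
    μ.toMeasure = (k : ℝ≥0∞)⁻¹ • ∑ i ∈ Finset.range k, Measure.dirac (T^[i] x)

/-- The upper Hausdorff dimension of a measure:
`dim_H^+(μ) = inf {dimH E | E Borel, μ(X \ E) = 0}`. -/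
noncomputable def dimHplus (μ : Measure X) : ℝ≥0∞ :=
  ⨅ (E : Set X) (_ : MeasurableSet E) (_ : μ Eᶜ = 0), dimH E

/-- The lower Hausdorff dimension of a measure:
`dim_H^-(μ) = inf {dimH E | E Borel, μ(E) > 0}`. -/
noncomputable def dimHminus (μ : Measure X) : ℝ≥0∞ :=
  ⨅ (E : Set X) (_ : MeasurableSet E) (_ : 0 < μ E), dimH E

/-- The return time `τ_s(x) = inf {k ≥ 1 | T^k x ∈ B(x,s)}`. -/
noncomputable def tauRet (T : X → X) (s : ℝ) (x : X) : ℕ :=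
  sInf {k : ℕ | 0 < k ∧ T^[k] x ∈ ball x s}

/-- The lower recurrence rate `R̲(x) = liminf_{s→0⁺} log τ_s(x) / (-log s)`. -/
noncomputable def Rlower (T : X → X) (x : X) : EReal :=
  liminf (fun s : ℝ =>
    ((Real.log (tauRet T s x : ℝ) / (-Real.log s) : ℝ) : EReal)) (𝓝[>] (0 : ℝ))

open Classical in
/-- The lower local dimension `d̲_μ(x) = liminf_{ε→0⁺} log μ(B(x,ε)) / log ε` when all balls
around `x` have positive measure, and `+∞` otherwise. -/
noncomputable def dLoc (μ : Measure X) (x : X) : EReal :=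
  if (∀ ε > 0, 0 < μ (ball x ε)) then
    liminf (fun ε : ℝ =>
      ((Real.log (μ (ball x ε)).toReal / Real.log ε : ℝ) : EReal)) (𝓝[>] (0 : ℝ))
  else ⊤

/-- The auxiliary continuous kernel `f^ε_x(y)`: equal to `1` if `dist x y ≤ ε`, to
`2 - dist x y / ε` if `ε ≤ dist x y ≤ 2ε`, and to `0` if `dist x y ≥ 2ε`. -/
noncomputable def fker (ε : ℝ) (x y : X) : ℝ :=
  if dist x y ≤ ε then 1 else if dist x y ≤ 2 * ε then 2 - dist x y / ε else 0

/-- `f_ε(μ, x) = ∫ f^ε_x(y) dμ(y)`. -/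
noncomputable def feps (ε : ℝ) (μ : Measure X) (x : X) : ℝ := ∫ y, fker ε x y ∂μ

/-- `G` is a finite covering of `X` by open balls of radius `ε` (given by its finite set of
centers). -/
def IsBallCover (ε : ℝ) (G : Finset X) : Prop := (⋃ x ∈ G, ball x ε) = univ

/-- `S_μ(s,ε) = inf_G ∑_{x ∈ G} μ(B(x,ε))^s`, the infimum running over all finite coverings of
`X` by balls of radius `ε`. -/
noncomputable def Sfun (μ : Measure X) (s ε : ℝ) : ℝ :=
  ⨅ G : {H : Finset X // IsBallCover ε H}, ∑ x ∈ G.val, (μ (ball x ε)).toReal ^ s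

/-- `W_μ(s,ε) = inf_G ∑_{x ∈ G} f_ε(μ,x)^s`, the infimum running over all finite coverings of
`X` by balls of radius `ε`. -/
noncomputable def Wfun (μ : Measure X) (s ε : ℝ) : ℝ :=
  ⨅ G : {H : Finset X // IsBallCover ε H}, ∑ x ∈ G.val, (feps ε μ x) ^ s

/-- The regularized energy function `J_μ(q,ε) = ∫ f_ε(μ,x)^(q-1) dμ(x)`. -/
noncomputable def Jfun (μ : Measure X) (q ε : ℝ) : ℝ :=
  ∫ x, (feps ε μ x) ^ (q - 1) ∂μ

end Defs

section Shift

variable {M : Type*} [MetricSpace M]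

/-- The "cylinder ball" `B^n(x,ε) = {y | d(x_i, y_i) < ε for all |i| ≤ n}` in `M^ℤ`. -/
def cylBall (n : ℕ) (x : ℤ → M) (ε : ℝ) : Set (ℤ → M) :=
  {y : ℤ → M | ∀ i : ℤ, |i| ≤ (n : ℤ) → dist (x i) (y i) < ε}

/-- For `ε ∈ (0,1)`, the largest integer `n ≥ 0` with `ε < 1/(n²+1)`. -/
noncomputable def nZero (ε : ℝ) : ℕ := sSup {n : ℕ | ε < 1 / ((n : ℝ) ^ 2 + 1)}

/-- The modified energy function `I^n_μ(q,ε) = ∫ μ(B^n(x,ε))^(q-1) dμ(x)`. -/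
noncomputable def Icyl [MeasurableSpace (ℤ → M)] (μ : Measure (ℤ → M)) (n : ℕ) (q ε : ℝ) :
    ℝ :=
  ∫ x, (μ (cylBall n x ε)).toReal ^ (q - 1) ∂μ

end Shift

section Limsup

variable {α : Type*} {l : Filter α}

lemma EReal.le_limsup_iff_forall_rat_frequently {u : α → EReal} {a : EReal} :
    a ≤ limsup u l ↔ ∀ b : ℚ, ((b : ℝ) : EReal) < a → ∃ᶠ x in l, ((b : ℝ) : EReal) < u x := by
  refine ⟨fun h b hb => frequently_lt_of_lt_limsup (by isBoundedDefault) (hb.trans_le h),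
    fun h => le_of_not_gt fun hlt => ?_⟩
  obtain ⟨b, hub, hba⟩ := EReal.lt_iff_exists_rat_btwn.1 hlt
  exact (le_limsup_of_frequently_le ((h b hba).mono fun _ => le_of_lt)).not_gt hub

lemma isGδ_setOf_le_limsup {T : Type*} [TopologicalSpace T] [l.IsCountablyGenerated]
    {g : T → α → EReal} {s : Set α} (hs : s ∈ l)
    (hg : ∀ x ∈ s, LowerSemicontinuous fun t => g t x) (a : EReal) :
    IsGδ {t | a ≤ limsup (g t) l} := by
  obtain ⟨V, hV⟩ := l.exists_antitone_basis
  have hset : {t | a ≤ limsup (g t) l} = ⋂ (b : ℚ) (_ : ((b : ℝ) : EReal) < a) (n : ℕ),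
      ⋃ x ∈ V n ∩ s, {t | ((b : ℝ) : EReal) < g t x} := by
    ext t
    simp only [mem_ofPred_eq, EReal.le_limsup_iff_forall_rat_frequently, mem_iInter, mem_iUnion,
      exists_prop]
    refine forall₂_congr fun b _ => ⟨fun hb n => ?_, fun hb => ?_⟩
    · obtain ⟨x, hx, hbx, hxs⟩ := hV.frequently_iff.1 (hb.and_eventually hs) n trivial
      exact ⟨x, ⟨hx, hxs⟩, hbx⟩
    · exact hV.frequently_iff.2 fun n _ => (hb n).imp fun x hx => ⟨hx.1.1, hx.2⟩
  rw [hset]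
  refine .iInter fun b => .iInter fun _ => .iInter fun n => IsOpen.isGδ ?_
  exact isOpen_biUnion fun x hx => (hg x hx.2).isOpen_preimage _

lemma EReal.limsup_le_limsup_of_mul_le {u v r : α → ℝ} (hr : Tendsto r l (𝓝 1))
    (hr_pos : ∀ᶠ x in l, 0 < r x) (h : ∀ᶠ x in l, u x * r x ≤ v x) :
    limsup (fun x => (u x : EReal)) l ≤ limsup (fun x => (v x : EReal)) l := by
  refine EReal.le_limsup_iff_forall_rat_frequently.2 fun b hb => ?_
  obtain ⟨c, hbc, hc⟩ := EReal.lt_iff_exists_rat_btwn.1 hb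
  have hcu := frequently_lt_of_lt_limsup (by isBoundedDefault) hc
  have hbcr : ∀ᶠ x in l, (b : ℝ) < c * r x := by
    refine (hr.const_mul (c : ℝ)).eventually (lt_mem_nhds ?_)
    simpa using hbc
  refine (hcu.and_eventually (hbcr.and (hr_pos.and h))).mono ?_
  rintro x ⟨hcux, hbx, hrx, hx⟩
  replace hcux : (c : ℝ) < u x := EReal.coe_lt_coe_iff.1 hcux
  exact EReal.coe_lt_coe_iff.2 (hbx.trans_le ((mul_le_mul_of_nonneg_right hcux.le hrx.le).trans hx))

end Limsup

lemma map_const_mul_nhdsGT_zero {𝕜 : Type*} [Field 𝕜] [LinearOrder 𝕜] [IsStrictOrderedRing 𝕜]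
    [TopologicalSpace 𝕜] [OrderTopology 𝕜] {c : 𝕜} (hc : 0 < c) :
    map (c * ·) (𝓝[>] 0) = 𝓝[>] 0 := by
  conv_lhs => rw [← comap_mulLeft_nhdsGT_zero hc]
  exact map_comap_of_surjective (mul_left_surjective₀ hc.ne') _

section Integrable

variable {α : Type*} [MeasurableSpace α] (μ : Measure α) [IsFiniteMeasure μ] {q : ℝ}

lemma integrable_rpow_of_mem_Icc {f : α → ℝ} (hf : Measurable f)
    (hf_mem : ∀ x, f x ∈ Icc (0 : ℝ) 1) (hq : 1 ≤ q) :
    Integrable (fun x => f x ^ (q - 1)) μ :=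
  .of_bound (hf.pow_const _).aestronglyMeasurable 1 <| ae_of_all _ fun x => by
    rw [Real.norm_of_nonneg (Real.rpow_nonneg (hf_mem x).1 _)]
    exact Real.rpow_le_one (hf_mem x).1 (hf_mem x).2 (by linarith)

end Integrable

section Kernel

variable {X : Type*} [MetricSpace X] {ε : ℝ}

lemma fker_eq_max_min (hε : 0 < ε) (x y : X) :
    fker ε x y = max 0 (min 1 (2 - dist x y / ε)) := by
  unfold fker
  split_ifs with h1 h2
  · rw [min_eq_left, max_eq_right] <;> nlinarith [div_le_one_of_le₀ h1 hε.le]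
  · have hd1 : 1 ≤ dist x y / ε := (le_div_iff₀ hε).2 (by linarith)
    have hd2 : dist x y / ε ≤ 2 := (div_le_iff₀ hε).2 (by linarith)
    rw [min_eq_right (by linarith), max_eq_right (by linarith)]
  · have hd2 : 2 ≤ dist x y / ε := (le_div_iff₀ hε).2 (by linarith)
    rw [max_eq_left (min_le_of_right_le (by linarith))]

lemma fker_nonneg (hε : 0 < ε) (x y : X) : 0 ≤ fker ε x y := by
  rw [fker_eq_max_min hε]
  exact le_max_left _ _

lemma fker_le_one (hε : 0 < ε) (x y : X) : fker ε x y ≤ 1 := by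
  rw [fker_eq_max_min hε]
  exact max_le zero_le_one (min_le_left _ _)

lemma abs_fker_sub_fker_le (hε : 0 < ε) (x x' y : X) :
    |fker ε x y - fker ε x' y| ≤ dist x x' / ε := by
  rw [fker_eq_max_min hε, fker_eq_max_min hε, max_comm 0, max_comm 0]
  calc _ ≤ |min 1 (2 - dist x y / ε) - min 1 (2 - dist x' y / ε)| := abs_max_sub_max_le_abs _ _ _
    _ ≤ |(2 - dist x y / ε) - (2 - dist x' y / ε)| := by
        simpa using abs_min_sub_min_le_max 1 (2 - dist x y / ε) 1 (2 - dist x' y / ε)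
    _ = |dist x' y - dist x y| / ε := by
        rw [← abs_of_pos hε, ← abs_div, abs_of_pos hε]
        ring_nf
    _ ≤ dist x x' / ε := by
        gcongr
        rw [abs_sub_comm]
        exact abs_dist_sub_le _ _ _

lemma continuous_fker (hε : 0 < ε) (x : X) : Continuous (fker ε x) := by
  simp_rw [funext (fker_eq_max_min hε x)]
  fun_prop

lemma indicator_ball_le_fker (hε : 0 < ε) (x y : X) :
    (ball x ε).indicator 1 y ≤ fker ε x y := by
  by_cases hy : y ∈ ball x ε
  · simp [fker, hy, (mem_ball'.1 hy).le]
  · rw [indicator_of_notMem hy]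
    exact fker_nonneg hε x y

lemma fker_le_indicator_ball (hε : 0 < ε) (x y : X) :
    fker ε x y ≤ (ball x (2 * ε)).indicator 1 y := by
  by_cases hy : y ∈ ball x (2 * ε)
  · rw [indicator_of_mem hy]
    exact fker_le_one hε x y
  · rw [indicator_of_notMem hy, fker_eq_max_min hε]
    have : 2 ≤ dist x y / ε := (le_div_iff₀ hε).2 (by rw [mem_ball', not_lt] at hy; linarith)
    exact max_le le_rfl (min_le_of_right_le (by linarith))

end Kernel

section Feps

variable {X : Type*} [MetricSpace X] [MeasurableSpace X] (μ : Measure X) {ε : ℝ}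

lemma feps_nonneg (hε : 0 < ε) (x : X) : 0 ≤ feps ε μ x :=
  integral_nonneg (fker_nonneg hε x)

variable [OpensMeasurableSpace X]

lemma integrable_fker [IsFiniteMeasure μ] (hε : 0 < ε) (x : X) : Integrable (fker ε x) μ :=
  .of_bound (continuous_fker hε x).aestronglyMeasurable 1 <| ae_of_all _ fun y => by
    rw [Real.norm_of_nonneg (fker_nonneg hε x y)]
    exact fker_le_one hε x y

lemma feps_le_one [IsProbabilityMeasure μ] (hε : 0 < ε) (x : X) : feps ε μ x ≤ 1 := by
  simpa [feps] using integral_mono (integrable_fker μ hε x) (integrable_const 1) (fker_le_one hε x)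

lemma toReal_measure_ball_le_feps [IsFiniteMeasure μ] (hε : 0 < ε) (x : X) :
    (μ (ball x ε)).toReal ≤ feps ε μ x := by
  simpa [feps, integral_indicator measurableSet_ball, measureReal_def] using
    integral_mono ((integrable_const 1).indicator measurableSet_ball) (integrable_fker μ hε x)
      (indicator_ball_le_fker hε x)

lemma feps_le_toReal_measure_ball [IsFiniteMeasure μ] (hε : 0 < ε) (x : X) :
    feps ε μ x ≤ (μ (ball x (2 * ε))).toReal := by
  simpa [feps, integral_indicator measurableSet_ball, measureReal_def] using
    integral_mono (integrable_fker μ hε x) ((integrable_const 1).indicator measurableSet_ball)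
      (fker_le_indicator_ball hε x)

lemma lipschitzWith_feps [IsProbabilityMeasure μ] (hε : 0 < ε) :
    LipschitzWith (Real.toNNReal ε⁻¹) (feps ε μ) := by
  refine .of_dist_le' fun x x' => ?_
  rw [Real.dist_eq, feps, feps, ← integral_sub (integrable_fker μ hε x) (integrable_fker μ hε x'),
    inv_mul_eq_div]
  simpa using norm_integral_le_of_norm_le_const (μ := μ)
    (ae_of_all _ fun y => (Real.norm_eq_abs _).trans_le (abs_fker_sub_fker_le hε x x' y))

end Feps

section Support

variable {X : Type*} [MetricSpace X] [MeasurableSpace X] (μ : Measure X)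

lemma msupp_eq_support : msupp μ = μ.support := by
  ext x
  rw [Measure.mem_support_iff_forall]
  refine ⟨fun hx U hU => ?_, fun hx ε hε => hx _ (ball_mem_nhds x hε)⟩
  obtain ⟨ε, hε, hεU⟩ := Metric.mem_nhds_iff.1 hU
  exact (hx ε hε).trans_le (measure_mono hεU)

lemma restrict_msupp [HereditarilyLindelofSpace X] : μ.restrict (msupp μ) = μ := by
  rw [msupp_eq_support]
  exact Measure.restrict_eq_self_of_ae_mem Measure.support_mem_ae

lemma energyI_eq_integral [HereditarilyLindelofSpace X] (q ε : ℝ) :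
    energyI μ q ε = ∫ x, (μ (ball x ε)).toReal ^ (q - 1) ∂μ := by
  rw [energyI, restrict_msupp]

lemma measurable_measure_ball [OpensMeasurableSpace X] [SecondCountableTopology X] [SFinite μ]
    (ε : ℝ) : Measurable fun x => μ (ball x ε) :=
  measurable_measure_prodMk_left
    (isOpen_lt (continuous_snd.dist continuous_fst) continuous_const).measurableSet

end Support

section Energy

variable {X : Type*} [MetricSpace X] [MeasurableSpace X] [OpensMeasurableSpace X]
  (μ : Measure X) [IsProbabilityMeasure μ] {q ε : ℝ}

lemma integrable_feps_rpow (hq : 1 ≤ q) (hε : 0 < ε) :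
    Integrable (fun x => feps ε μ x ^ (q - 1)) μ :=
  integrable_rpow_of_mem_Icc μ (lipschitzWith_feps μ hε).continuous.measurable
    (fun x => ⟨feps_nonneg μ hε x, feps_le_one μ hε x⟩) hq

variable [SecondCountableTopology X]

lemma integrable_measure_ball_rpow (hq : 1 ≤ q) (ε : ℝ) :
    Integrable (fun x => (μ (ball x ε)).toReal ^ (q - 1)) μ :=
  integrable_rpow_of_mem_Icc μ (measurable_measure_ball μ ε).ennreal_toReal
    (fun _ => ⟨ENNReal.toReal_nonneg, measureReal_le_one⟩) hq

lemma energyI_pos (hq : 1 ≤ q) (hε : 0 < ε) : 0 < energyI μ q ε := by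
  rw [energyI_eq_integral, integral_pos_iff_support_of_nonneg
    (fun x => Real.rpow_nonneg ENNReal.toReal_nonneg _) (integrable_measure_ball_rpow μ hq ε)]
  have hsupp : μ (msupp μ) = 1 := by
    rw [← Measure.restrict_apply_univ, restrict_msupp, measure_univ]
  refine (zero_lt_one.trans_le hsupp.ge).trans_le (measure_mono fun x hx => ?_)
  exact (Real.rpow_pos_of_pos (ENNReal.toReal_pos (hx ε hε).ne' (measure_ne_top μ _)) _).ne'

lemma energyI_le_jfun (hq : 1 ≤ q) (hε : 0 < ε) : energyI μ q ε ≤ Jfun μ q ε := by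
  rw [energyI_eq_integral]
  exact integral_mono (integrable_measure_ball_rpow μ hq ε) (integrable_feps_rpow μ hq hε)
    fun x => by gcongr; exact toReal_measure_ball_le_feps μ hε x

lemma jfun_le_energyI_two_mul (hq : 1 ≤ q) (hε : 0 < ε) : Jfun μ q ε ≤ energyI μ q (2 * ε) := by
  rw [energyI_eq_integral]
  exact integral_mono (integrable_feps_rpow μ hq hε) (integrable_measure_ball_rpow μ hq _)
    fun x => by gcongr; exacts [feps_nonneg μ hε x, feps_le_toReal_measure_ball μ hε x]

lemma jfun_pos (hq : 1 ≤ q) (hε : 0 < ε) : 0 < Jfun μ q ε :=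
  (energyI_pos μ hq hε).trans_le (energyI_le_jfun μ hq hε)

end Energy

section Continuity

variable {X : Type*} [MetricSpace X] [CompactSpace X] [MeasurableSpace X] [OpensMeasurableSpace X]

lemma MeasureTheory.ProbabilityMeasure.continuous_integral_prod :
    Continuous fun p : ProbabilityMeasure X × C(X, ℝ) => ∫ x, p.2 x ∂(p.1 : Measure X) := by
  refine continuous_iff_continuousAt.2 fun ⟨μ₀, f₀⟩ => ?_
  have h_fixed : Tendsto (fun p : ProbabilityMeasure X × C(X, ℝ) => ∫ x, f₀ x ∂(p.1 : Measure X))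
      (𝓝 (μ₀, f₀)) (𝓝 (∫ x, f₀ x ∂(μ₀ : Measure X))) :=
    ((ProbabilityMeasure.continuous_integral_continuousMap f₀).comp continuous_fst).continuousAt
  have h_diff : Tendsto (fun p : ProbabilityMeasure X × C(X, ℝ) =>
      ∫ x, (p.2 - f₀) x ∂(p.1 : Measure X)) (𝓝 (μ₀, f₀)) (𝓝 0) := by
    refine squeeze_zero_norm (fun p => norm_integral_le_of_norm_le_const
      (ae_of_all _ fun x => (p.2 - f₀).norm_coe_le_norm x)) ?_
    simpa using (continuous_snd.sub (continuous_const (y := f₀))).norm.tendsto (μ₀, f₀)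
  refine (zero_add (∫ x, f₀ x ∂(μ₀ : Measure X)) ▸ h_diff.add h_fixed).congr fun p => ?_
  have h_int : ∀ f : C(X, ℝ), Integrable f (p.1 : Measure X) := fun f =>
    f.continuous.integrable_of_hasCompactSupport (.of_compactSpace _)
  simp [integral_sub (h_int p.2) (h_int f₀)]

variable {ε : ℝ}

lemma continuous_feps (hε : 0 < ε) : Continuous fun μ : ProbabilityMeasure X =>
    (⟨feps ε μ, (lipschitzWith_feps (μ : Measure X) hε).continuous⟩ : C(X, ℝ)) := by
  refine (ContinuousMap.continuous_iff_continuous_uniformFun _).2 <|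
    continuous_iff_continuousAt.2 fun μ₀ => ?_
  have h_equicont : Equicontinuous fun μ : ProbabilityMeasure X => feps ε (μ : Measure X) :=
    (LipschitzWith.uniformEquicontinuous _ _ fun μ => lipschitzWith_feps _ hε).equicontinuous
  refine (h_equicont.tendsto_uniformFun_iff_pi _ _).2 (tendsto_pi_nhds.2 fun x => ?_)
  exact (ProbabilityMeasure.continuous_integral_continuousMap
    (⟨fker ε x, continuous_fker hε x⟩ : C(X, ℝ))).continuousAt

lemma continuous_jfun {q : ℝ} (hq : 1 ≤ q) (hε : 0 < ε) :
    Continuous fun μ : ProbabilityMeasure X => Jfun (μ : Measure X) q ε := by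
  let rpow : C(ℝ, ℝ) := ⟨fun t => t ^ (q - 1), Real.continuous_rpow_const (by linarith)⟩
  -- `Jfun μ q ε` is definitionally the pairing of `μ` with `rpow ∘ feps ε μ`.
  exact ProbabilityMeasure.continuous_integral_prod.comp
    (continuous_id.prodMk ((ContinuousMap.continuous_postcomp rpow).comp (continuous_feps hε)))

end Continuity

lemma tendsto_log_two_mul_div_log :
    Tendsto (fun ε => Real.log (2 * ε) / Real.log ε) (𝓝[>] 0) (𝓝 1) := by
  have h_log : Tendsto (fun ε => 1 + Real.log 2 / Real.log ε) (𝓝[>] 0) (𝓝 1) := by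
    simpa using tendsto_const_nhds.add (tendsto_const_nhds.div_atBot Real.tendsto_log_nhdsGT_zero)
  refine h_log.congr' ?_
  filter_upwards [Ioo_mem_nhdsGT one_pos] with ε hε
  rw [Real.log_mul two_ne_zero hε.1.ne']
  field_simp [(Real.log_neg hε.1 hε.2).ne]
  ring

section Dimension

variable {X : Type*} [MetricSpace X] [MeasurableSpace X] [OpensMeasurableSpace X]
  [SecondCountableTopology X] (μ : Measure X) [IsProbabilityMeasure μ] {q : ℝ}

lemma dupper_eq_limsup_jfun (hq : 1 < q) : Dupper μ q =
    limsup (fun ε => ((Real.log (Jfun μ q ε) / ((q - 1) * Real.log ε) : ℝ) : EReal)) (𝓝[>] 0) := by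
  have h_small : ∀ᶠ ε in 𝓝[>] (0 : ℝ), ε ∈ Ioo 0 (1 / 2) :=
    Ioo_mem_nhdsGT (by norm_num)
  have h_den : ∀ ε ∈ Ioo (0 : ℝ) (1 / 2), (q - 1) * Real.log ε < 0 := fun ε hε =>
    mul_neg_of_pos_of_neg (sub_pos.2 hq) (Real.log_neg hε.1 (by linarith [hε.2]))
  refine le_antisymm ?_ (limsup_le_limsup (h_small.mono fun ε hε => ?_))
  · rw [Dupper]
    conv_lhs => rw [← map_const_mul_nhdsGT_zero two_pos, ← limsup_comp]
    refine EReal.limsup_le_limsup_of_mul_le (r := fun ε => Real.log (2 * ε) / Real.log ε) ?_ ?_ ?_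
    · exact tendsto_log_two_mul_div_log
    · exact h_small.mono fun ε hε => div_pos_of_neg_of_neg
        (Real.log_neg (by linarith [hε.1]) (by linarith [hε.2])) (Real.log_neg hε.1 (by linarith [hε.2]))
    · refine h_small.mono fun ε hε => ?_
      have h_log2 : Real.log (2 * ε) ≠ 0 :=
        (Real.log_neg (by linarith [hε.1]) (by linarith [hε.2])).ne
      calc _ = Real.log (energyI μ q (2 * ε)) / ((q - 1) * Real.log ε) := by
            dsimp only
            field_simp
        _ ≤ _ := div_le_div_of_nonpos_of_le (h_den ε hε).le <|
            Real.log_le_log (jfun_pos μ hq.le hε.1) (jfun_le_energyI_two_mul μ hq.le hε.1)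
  · exact EReal.coe_le_coe_iff.2 <| div_le_div_of_nonpos_of_le (h_den ε hε).le <|
      Real.log_le_log (energyI_pos μ hq.le hε.1) (energyI_le_jfun μ hq.le hε.1)

end Dimension

theorem statement14_general {X : Type*} [MetricSpace X] [CompactSpace X]
    [MeasurableSpace X] [BorelSpace X]
    (α q : ℝ) (hq : 1 < q) :
    IsGδ {μ : ProbabilityMeasure X | ((α : ℝ) : EReal) ≤ Dupper μ.toMeasure q} ∧
    IsGδ {μ : ProbabilityMeasure X | Dupper μ.toMeasure q = (⊤ : EReal)} := by
  have h_lsc : ∀ ε ∈ Ioi (0 : ℝ), LowerSemicontinuous fun μ : ProbabilityMeasure X =>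
      ((Real.log (Jfun (μ : Measure X) q ε) / ((q - 1) * Real.log ε) : ℝ) : EReal) :=
    fun ε hε => (continuous_coe_real_ereal.comp <| ((continuous_jfun hq.le hε).log
      fun μ => (jfun_pos _ hq.le hε).ne').div_const _).lowerSemicontinuous
  have h_Gδ (a : EReal) : IsGδ {μ : ProbabilityMeasure X | a ≤ Dupper μ.toMeasure q} := by
    simp_rw [dupper_eq_limsup_jfun _ hq]
    exact isGδ_setOf_le_limsup self_mem_nhdsWithin h_lsc a
  exact ⟨h_Gδ α, by simpa only [top_le_iff] using h_Gδ ⊤⟩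

/-- For a compact metric space `X`, `α > 0` and `q > 1`, the set
`{μ | D⁺_μ(q) ≥ α}` is a `G_δ` subset of the space of Borel probability measures on `X` with
the weak topology; consequently `{μ | D⁺_μ(q) = +∞}` is also a `G_δ` set. -/
theorem statement14 {X : Type*} [MetricSpace X] [CompactSpace X]
    [MeasurableSpace X] [BorelSpace X]
    (α q : ℝ) (hα : 0 < α) (hq : 1 < q) :
    IsGδ {μ : ProbabilityMeasure X | ((α : ℝ) : EReal) ≤ Dupper μ.toMeasure q} ∧
    IsGδ {μ : ProbabilityMeasure X | Dupper μ.toMeasure q = (⊤ : EReal)} :=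
  statement14_general α q hq
end

section
/- Let (X,T) be a topological dynamical system such that the set M_p of T-periodic measures is dense in M(T), and let s ∈ (0,1). Then {μ ∈ M(T) : liminf_{ε→0⁺} log S_μ(s,ε) / ((s−1) log ε) = 0} is a dense subset of M(T). -/
open MeasureTheory Filter Topology Metric Set
open scoped ENNReal NNReal

/-!
A periodic measure is carried by a finite set `F` (the orbit). Some point of `F` has mass at least
`1/#F`, so every `ε`-cover has a ball of mass `≥ 1/#F` and `S_μ(s,ε) ≥ #F^(-s)`; conversely the
balls of a cover centred outside the `ε`-neighbourhood of `F` are null, so `S_μ(s,ε) ≤ #F`. Hence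
`log S_μ(s,ε)` stays bounded while `(s-1) log ε → ∞`, the ratio tends to `0`, and the measures in
question contain the dense set of periodic measures.
-/

theorem tendsto_div_mul_log_nhdsGT_zero_of_abs_le {f : ℝ → ℝ} {C c : ℝ} (hc : c ≠ 0)
    (hf : ∀ᶠ ε in 𝓝[>] (0 : ℝ), |f ε| ≤ C) :
    Tendsto (fun ε => f ε / (c * Real.log ε)) (𝓝[>] (0 : ℝ)) (𝓝 0) := by
  have hlog : Tendsto (fun ε => |c * Real.log ε|) (𝓝[>] (0 : ℝ)) atTop := by
    simp_rw [abs_mul]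
    exact (tendsto_abs_atBot_atTop.comp Real.tendsto_log_nhdsGT_zero).const_mul_atTop
      (abs_pos.2 hc)
  have hbound : Tendsto (fun ε => C * |c * Real.log ε|⁻¹) (𝓝[>] (0 : ℝ)) (𝓝 0) := by
    simpa using hlog.inv_tendsto_atTop.const_mul C
  refine squeeze_zero_norm' ?_ hbound
  filter_upwards [hf] with ε hε
  rw [Real.norm_eq_abs, abs_div, div_eq_mul_inv]
  exact mul_le_mul_of_nonneg_right hε (by positivity)

theorem exists_inv_card_le_measure_singleton {X : Type*} [MeasurableSpace X] (μ : Measure X)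
    [IsProbabilityMeasure μ] (F : Finset X) (hF : μ (↑F)ᶜ = 0) :
    ∃ x ∈ F, (F.card : ℝ≥0∞)⁻¹ ≤ μ {x} := by
  have hμF : 1 ≤ μ F :=
    calc (1 : ℝ≥0∞) = μ (↑F ∪ (↑F)ᶜ) := by rw [union_compl_self, measure_univ]
      _ ≤ μ F + μ (↑F)ᶜ := measure_union_le _ _
      _ = μ F := by rw [hF, add_zero]
  have hne : F.Nonempty := Finset.nonempty_iff_ne_empty.2 fun h => by simp [h] at hμF
  refine ENNReal.exists_le_of_sum_le hne ?_
  calc ∑ _ ∈ F, (F.card : ℝ≥0∞)⁻¹ = 1 := by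
        rw [Finset.sum_const, nsmul_eq_mul, ENNReal.mul_inv_cancel (by simpa using hne.ne_empty)
          (ENNReal.natCast_ne_top _)]
    _ ≤ μ (⋃ x ∈ F, {x}) := by rwa [← Finset.set_biUnion_coe, biUnion_of_singleton]
    _ ≤ ∑ x ∈ F, μ {x} := measure_biUnion_finset_le F _

theorem nonempty_ballCover {X : Type*} [MetricSpace X] [CompactSpace X] {ε : ℝ} (hε : 0 < ε) :
    Nonempty {H : Finset X // IsBallCover ε H} := by
  obtain ⟨t, ht⟩ := isCompact_univ.elim_finite_subcover (fun c : X => ball c ε)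
    (fun _ => isOpen_ball) (fun y _ => mem_iUnion.2 ⟨y, mem_ball_self hε⟩)
  exact ⟨⟨t, eq_univ_of_univ_subset ht⟩⟩

section Sfun

variable {X : Type*} [MetricSpace X] [MeasurableSpace X]

theorem bddBelow_range_sum_rpow_measure_ball (μ : Measure X) (s ε : ℝ) :
    BddBelow (range fun G : {H : Finset X // IsBallCover ε H} =>
      ∑ x ∈ G.val, (μ (ball x ε)).toReal ^ s) := by
  refine ⟨0, ?_⟩
  rintro _ ⟨G, rfl⟩
  exact Finset.sum_nonneg fun _ _ => Real.rpow_nonneg ENNReal.toReal_nonneg _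

theorem rpow_le_Sfun [CompactSpace X] (μ : Measure X) [IsFiniteMeasure μ] {s ε : ℝ}
    (hε : 0 < ε) (hs : 0 ≤ s) {m : ℝ≥0∞} {x : X} (hx : m ≤ μ {x}) : m.toReal ^ s ≤ Sfun μ s ε := by
  have := nonempty_ballCover (X := X) hε
  refine le_ciInf fun G => ?_
  obtain ⟨c, hc, hxc⟩ := mem_iUnion₂.1 (G.prop ▸ mem_univ x : x ∈ ⋃ c ∈ G.val, ball c ε)
  have hm : m ≤ μ (ball c ε) := hx.trans (measure_mono (singleton_subset_iff.2 hxc))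
  calc m.toReal ^ s ≤ (μ (ball c ε)).toReal ^ s :=
        Real.rpow_le_rpow ENNReal.toReal_nonneg (ENNReal.toReal_mono (measure_ne_top μ _) hm) hs
    _ ≤ ∑ c ∈ G.val, (μ (ball c ε)).toReal ^ s :=
        Finset.single_le_sum (f := fun c => (μ (ball c ε)).toReal ^ s)
          (fun _ _ => Real.rpow_nonneg ENNReal.toReal_nonneg _) hc

theorem Sfun_le_card [CompactSpace X] (μ : Measure X) [IsProbabilityMeasure μ] {s ε : ℝ}
    (hε : 0 < ε) (hs : 0 < s) (F : Finset X) (hF : μ (↑F)ᶜ = 0) : Sfun μ s ε ≤ F.card := by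
  classical
  set K : Set X := (⋃ c ∈ F, ball c ε)ᶜ
  have hK : IsCompact K := (isOpen_biUnion fun _ _ => isOpen_ball).isClosed_compl.isCompact
  obtain ⟨t, ht⟩ := hK.elim_finite_subcover (fun c : K => ball (c : X) ε) (fun _ => isOpen_ball)
    (fun y hy => mem_iUnion.2 ⟨⟨y, hy⟩, mem_ball_self hε⟩)
  have hcover : IsBallCover ε (t.image Subtype.val ∪ F) := by
    refine eq_univ_of_forall fun y => ?_
    by_cases hy : y ∈ K
    · obtain ⟨c, hc, hyc⟩ := mem_iUnion₂.1 (ht hy)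
      exact mem_iUnion₂.2 ⟨c, Finset.mem_union_left _ (Finset.mem_image_of_mem _ hc), hyc⟩
    · obtain ⟨c, hc, hyc⟩ := mem_iUnion₂.1 (not_not.1 hy)
      exact mem_iUnion₂.2 ⟨c, Finset.mem_union_right _ hc, hyc⟩
  have hterm : ∀ c ∈ t.image Subtype.val ∪ F,
      (μ (ball c ε)).toReal ^ s ≤ if c ∈ F then 1 else 0 := by
    intro c hc
    split_ifs with hcF
    · exact Real.rpow_le_one ENNReal.toReal_nonneg
        (ENNReal.toReal_le_of_le_ofReal zero_le_one (by simpa using prob_le_one)) hs.le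
    · obtain ⟨c', -, rfl⟩ := Finset.mem_image.1 ((Finset.mem_union.1 hc).resolve_right hcF)
      have hdisj : ball (c' : X) ε ⊆ (↑F)ᶜ := fun y hy hyF =>
        c'.prop (mem_iUnion₂.2 ⟨y, hyF, by rwa [mem_ball_comm]⟩)
      rw [measure_mono_null hdisj hF, ENNReal.toReal_zero, Real.zero_rpow hs.ne']
  calc Sfun μ s ε ≤ ∑ c ∈ t.image Subtype.val ∪ F, (μ (ball c ε)).toReal ^ s :=
        ciInf_le (bddBelow_range_sum_rpow_measure_ball μ s ε) ⟨_, hcover⟩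
    _ ≤ ∑ c ∈ t.image Subtype.val ∪ F, if c ∈ F then (1 : ℝ) else 0 := Finset.sum_le_sum hterm
    _ = F.card := by
        rw [Finset.sum_ite_mem, Finset.union_inter_cancel_right, Finset.sum_const,
          nsmul_one]

theorem tendsto_log_Sfun_div_mul_log [CompactSpace X] (μ : Measure X) [IsProbabilityMeasure μ]
    {s c : ℝ} (hs : 0 < s) (hc : c ≠ 0) (F : Finset X) (hF : μ (↑F)ᶜ = 0) :
    Tendsto (fun ε => Real.log (Sfun μ s ε) / (c * Real.log ε)) (𝓝[>] (0 : ℝ)) (𝓝 0) := by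
  obtain ⟨x, hxF, hx⟩ := exists_inv_card_le_measure_singleton μ F hF
  have hcard : 1 ≤ (F.card : ℝ) := by
    simpa using (Finset.card_pos.2 ⟨x, hxF⟩ : 0 < F.card)
  refine tendsto_div_mul_log_nhdsGT_zero_of_abs_le (C := (s + 1) * Real.log F.card) hc ?_
  filter_upwards [self_mem_nhdsWithin] with ε (hε : 0 < ε)
  have hlow := rpow_le_Sfun μ hε hs.le hx
  rw [ENNReal.toReal_inv, ENNReal.toReal_natCast] at hlow
  have hpos : 0 < ((F.card : ℝ)⁻¹) ^ s := by positivity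
  have hlog_low : -(s * Real.log F.card) ≤ Real.log (Sfun μ s ε) := by
    have := Real.log_le_log hpos hlow
    rwa [Real.log_rpow (by positivity), Real.log_inv, mul_neg] at this
  have hlog_up : Real.log (Sfun μ s ε) ≤ Real.log F.card :=
    Real.log_le_log (hpos.trans_le hlow) (Sfun_le_card μ hε hs F hF)
  have := Real.log_nonneg hcard
  rw [abs_le]
  constructor <;> nlinarith

end Sfun

theorem IsPeriodicMeasure.exists_finset_measure_compl_eq_zero {X : Type*} [MetricSpace X]
    [MeasurableSpace X] [MeasurableSingletonClass X] {T : X → X} {μ : ProbabilityMeasure X}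
    (hμ : IsPeriodicMeasure T μ) : ∃ F : Finset X, μ.toMeasure (↑F)ᶜ = 0 := by
  classical
  obtain ⟨x, k, -, -, hμk⟩ := hμ
  refine ⟨(Finset.range k).image (T^[·] x), ?_⟩
  rw [hμk]
  refine (Measure.smul_apply _ _ _).trans ?_
  rw [Measure.coe_finsetSum, Finset.sum_apply, Finset.sum_eq_zero, smul_zero]
  intro i hi
  rw [Measure.dirac_apply' _ (Finset.measurableSet _).compl, indicator_of_notMem]
  simpa using Finset.mem_image_of_mem (T^[·] x) hi

theorem statement15_general {X : Type*} [MetricSpace X] [CompactSpace X]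
    [MeasurableSpace X] [BorelSpace X]
    (T : X → X)
    (hdense : Dense {μ : ↥(invSet T) | IsPeriodicMeasure T μ.val})
    (s : ℝ) (hs : s ∈ Ioo (0 : ℝ) 1) :
    Dense {μ : ↥(invSet T) |
      liminf (fun ε : ℝ =>
        ((Real.log (Sfun μ.val.toMeasure s ε) / ((s - 1) * Real.log ε) : ℝ) : EReal))
        (𝓝[>] (0 : ℝ)) = (0 : EReal)} := by
  refine hdense.mono fun μ hμ => ?_
  obtain ⟨F, hF⟩ := hμ.exists_finset_measure_compl_eq_zero
  have hlim := tendsto_log_Sfun_div_mul_log μ.val.toMeasure hs.1 (sub_ne_zero.2 hs.2.ne) F hF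
  simpa [Function.comp_def] using ((continuous_coe_real_ereal.tendsto 0).comp hlim).liminf_eq

/-- For a topological dynamical system `(X,T)` with the `T`-periodic
measures dense in `M(T)` and `s ∈ (0,1)`, the set
`{μ ∈ M(T) | liminf_{ε→0⁺} log S_μ(s,ε)/((s-1) log ε) = 0}` is dense in `M(T)`. -/
theorem statement15 {X : Type*} [MetricSpace X] [CompactSpace X]
    [MeasurableSpace X] [BorelSpace X]
    (T : X → X) (hT : Continuous T)
    (hdense : Dense {μ : ↥(invSet T) | IsPeriodicMeasure T μ.val})
    (s : ℝ) (hs : s ∈ Ioo (0 : ℝ) 1) :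
    Dense {μ : ↥(invSet T) |
      liminf (fun ε : ℝ =>
        ((Real.log (Sfun μ.val.toMeasure s ε) / ((s - 1) * Real.log ε) : ℝ) : EReal))
        (𝓝[>] (0 : ℝ)) = (0 : EReal)} :=
  statement15_general T hdense s hs
end
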